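/- Let 0 ≤ a < b, let u be a solution with initial value a on [0,R) and let v be a solution with initial value b on [0,R). Then u(r) < v(r) for every r ∈ [0,R). -/

import Mathlib

open MeasureTheory Real Filter Set
open scoped ENNReal Topology

noncomputable section

/-- The interval [0, R) for an extended-real radius `R`. -/
def odeDom (R : ℝ≥0∞) : Set ℝ := {r : ℝ | 0 ≤ r ∧ ENNReal.ofReal r < R}

/-- `u` is a solution with initial value `a` on `[0, R)` of
u'' + ((m-1)/r) u' = φ(u), u(0) = a, u'(0) = 0, with `u` nonnegative and C². -/
def IsSolOn (m : ℝ) (φ : ℝ → ℝ) (a : ℝ) (R : ℝ≥0∞) (u : ℝ → ℝ) : Prop :=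
  ContDiffOn ℝ 2 u (odeDom R) ∧
  (∀ r ∈ odeDom R, 0 ≤ u r) ∧
  u 0 = a ∧
  derivWithin u (Set.Ici 0) 0 = 0 ∧
  ∀ r : ℝ, 0 < r → ENNReal.ofReal r < R →
    deriv (deriv u) r + ((m - 1) / r) * deriv u r = φ (u r)

/-!
Write `w = v - u`, so `w 0 = b - a > 0`. If `w` had a zero in `[0, R)`, let `ρ` be the first one.
On `(0, ρ)` we have `0 ≤ u < v`, so monotonicity of `φ` gives
`(t ^ (m - 1) * w' t)' = t ^ (m - 1) * (φ (v t) - φ (u t)) ≥ 0`. Since `t ^ (m - 1) * w' t`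
vanishes at `t = 0`, it is nonnegative on `(0, ρ)`, hence `w' ≥ 0` there and
`w ρ ≥ w 0 > 0`, a contradiction.
-/

section SecondDerivative

variable {𝕜 F : Type*} [NontriviallyNormedField 𝕜] [NormedAddCommGroup F] [NormedSpace 𝕜 F]

theorem ContDiffAt.differentiableAt_deriv {f : 𝕜 → F} {x : 𝕜}
    (hf : ContDiffAt 𝕜 2 f x) : DifferentiableAt 𝕜 (deriv f) x :=
  (hf.derivWithin (m := 1) (by norm_num)).differentiableAt one_ne_zero

theorem ContDiffAt.deriv_deriv_sub {f g : 𝕜 → F} {x : 𝕜}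
    (hf : ContDiffAt 𝕜 2 f x) (hg : ContDiffAt 𝕜 2 g x) :
    deriv (deriv (f - g)) x = deriv (deriv f) x - deriv (deriv g) x := by
  have h : deriv (f - g) =ᶠ[𝓝 x] deriv f - deriv g := by
    filter_upwards [hf.eventually (by simp), hg.eventually (by simp)] with y hfy hgy
    exact deriv_sub (hfy.differentiableAt two_ne_zero) (hgy.differentiableAt two_ne_zero)
  rw [h.deriv_eq]
  exact deriv_sub hf.differentiableAt_deriv hg.differentiableAt_deriv

end SecondDerivative

theorem hasDerivAt_rpow_mul_deriv {k t : ℝ} {w : ℝ → ℝ} (ht : 0 < t) (hw : ContDiffAt ℝ 2 w t) :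
    HasDerivAt (fun s => s ^ k * deriv w s)
      (t ^ k * (deriv (deriv w) t + k / t * deriv w t)) t := by
  refine ((hasDerivAt_rpow_const (p := k) (Or.inl ht.ne')).mul
    hw.differentiableAt_deriv.hasDerivAt).congr_deriv ?_
  rw [rpow_sub_one ht.ne']
  field_simp
  ring

section RadialOperator

variable {k ρ : ℝ} {w : ℝ → ℝ}

/-- One-sided derivative at `0`, so that the weighted derivative is continuous up to `t = 0`. -/
theorem monotoneOn_rpow_mul_derivWithin (hk : 0 ≤ k) (hρ : 0 < ρ)
    (hw : ContDiffOn ℝ 2 w (Icc 0 ρ))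
    (hL : ∀ t ∈ Ioo 0 ρ, 0 ≤ deriv (deriv w) t + k / t * deriv w t) :
    MonotoneOn (fun t => t ^ k * derivWithin w (Icc 0 ρ) t) (Icc 0 ρ) := by
  have hderiv : ∀ t ∈ Ioo 0 ρ, HasDerivAt (fun t => t ^ k * derivWithin w (Icc 0 ρ) t)
      (t ^ k * (deriv (deriv w) t + k / t * deriv w t)) t := by
    intro t ht
    refine (hasDerivAt_rpow_mul_deriv ht.1 (hw.contDiffAt (Icc_mem_nhds ht.1 ht.2)))
      |>.congr_of_eventuallyEq ?_
    filter_upwards [Ioo_mem_nhds ht.1 ht.2] with s hs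
    rw [derivWithin_of_mem_nhds (Icc_mem_nhds hs.1 hs.2)]
  have hcont : ContinuousOn (fun t => t ^ k * derivWithin w (Icc 0 ρ) t) (Icc 0 ρ) :=
    (continuousOn_id.rpow_const fun _ _ => Or.inr hk).mul
      (hw.continuousOn_derivWithin (uniqueDiffOn_Icc hρ) one_le_two)
  refine monotoneOn_of_deriv_nonneg (convex_Icc 0 ρ) hcont ?_ ?_ <;> rw [interior_Icc]
  · exact fun t ht => (hderiv t ht).differentiableAt.differentiableWithinAt
  · intro t ht
    rw [(hderiv t ht).deriv]
    exact mul_nonneg (rpow_nonneg ht.1.le k) (hL t ht)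

theorem monotoneOn_of_radial_nonneg (hk : 0 < k) (hρ : 0 < ρ)
    (hw : ContDiffOn ℝ 2 w (Icc 0 ρ))
    (hL : ∀ t ∈ Ioo 0 ρ, 0 ≤ deriv (deriv w) t + k / t * deriv w t) :
    MonotoneOn w (Icc 0 ρ) := by
  refine monotoneOn_of_deriv_nonneg (convex_Icc 0 ρ) hw.continuousOn ?_ ?_ <;> rw [interior_Icc]
  · exact fun t ht => ((hw.contDiffAt (Icc_mem_nhds ht.1 ht.2)).differentiableAt
      two_ne_zero).differentiableWithinAt
  · intro t ht
    have h := monotoneOn_rpow_mul_derivWithin hk.le hρ hw hL (left_mem_Icc.2 hρ.le)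
      (Ioo_subset_Icc_self ht) ht.1.le
    dsimp only at h
    rw [zero_rpow hk.ne', zero_mul, derivWithin_of_mem_nhds (Icc_mem_nhds ht.1 ht.2)] at h
    exact nonneg_of_mul_nonneg_right h (rpow_pos_of_pos ht.1 k)

end RadialOperator

theorem exists_first_nonpos {w : ℝ → ℝ} {a r : ℝ} (hw : ContinuousOn w (Icc a r))
    (ha : 0 < w a) (har : a ≤ r) (hr : w r ≤ 0) :
    ∃ ρ ∈ Ioc a r, w ρ ≤ 0 ∧ ∀ t ∈ Ico a ρ, 0 < w t := by
  set S := Icc a r ∩ w ⁻¹' Iic 0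
  have hS : IsClosed S := hw.preimage_isClosed_of_isClosed isClosed_Icc isClosed_Iic
  have hbdd : BddBelow S := ⟨a, fun t ht => ht.1.1⟩
  obtain ⟨⟨hρa, hρr⟩, hρ⟩ := hS.csInf_mem ⟨r, ⟨har, le_rfl⟩, hr⟩ hbdd
  refine ⟨sInf S, ⟨hρa.lt_of_ne ?_, hρr⟩, hρ, fun t ht => ?_⟩
  · rintro h
    exact (h ▸ hρ : w a ≤ 0).not_gt ha
  · by_contra! hwt
    exact (csInf_le hbdd ⟨⟨ht.1, ht.2.le.trans hρr⟩, hwt⟩).not_gt ht.2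

theorem odeDom_mem_nhds {R : ℝ≥0∞} {t : ℝ} (ht : 0 < t) (htR : ENNReal.ofReal t < R) :
    odeDom R ∈ 𝓝 t :=
  mem_of_superset (inter_mem (Ioi_mem_nhds ht)
    ((isOpen_lt ENNReal.continuous_ofReal continuous_const).mem_nhds htR))
    fun _ hs => ⟨le_of_lt hs.1, hs.2⟩

theorem Icc_subset_odeDom {R : ℝ≥0∞} {r : ℝ} (hrR : ENNReal.ofReal r < R) :
    Icc 0 r ⊆ odeDom R :=
  fun _ ht => ⟨ht.1, (ENNReal.ofReal_le_ofReal ht.2).trans_lt hrR⟩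

theorem IsSolOn.radial_sub {m a b : ℝ} {φ : ℝ → ℝ} {R : ℝ≥0∞} {u v : ℝ → ℝ}
    (hu : IsSolOn m φ a R u) (hv : IsSolOn m φ b R v) {t : ℝ} (ht : 0 < t)
    (htR : ENNReal.ofReal t < R) :
    deriv (deriv (v - u)) t + (m - 1) / t * deriv (v - u) t = φ (v t) - φ (u t) := by
  have hu' := hu.1.contDiffAt (odeDom_mem_nhds ht htR)
  have hv' := hv.1.contDiffAt (odeDom_mem_nhds ht htR)
  rw [hv'.deriv_deriv_sub hu',
    deriv_sub (hv'.differentiableAt two_ne_zero) (hu'.differentiableAt two_ne_zero)]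
  linear_combination hv.2.2.2.2 t ht htR - hu.2.2.2.2 t ht htR

theorem sol_strict_comparison_general
    (m : ℝ) (hm : 2 < m)
    (φ : ℝ → ℝ)
    (hφmono : MonotoneOn φ (Set.Ici 0))
    (a b : ℝ) (hab : a < b) (R : ℝ≥0∞)
    (u v : ℝ → ℝ) (hu : IsSolOn m φ a R u) (hv : IsSolOn m φ b R v) :
    ∀ r : ℝ, 0 ≤ r → ENNReal.ofReal r < R → u r < v r := by
  intro r hr hrR
  by_contra! hvu
  have hw0 : (v - u) 0 = b - a := by simp [hu.2.2.1, hv.2.2.1]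
  obtain ⟨ρ, ⟨hρ, hρr⟩, hwρ, hpos⟩ := exists_first_nonpos
    ((hv.1.continuousOn.sub hu.1.continuousOn).mono (Icc_subset_odeDom hrR))
    (by linarith) hr (by simpa using hvu)
  have hρR : ENNReal.ofReal ρ < R := (ENNReal.ofReal_le_ofReal hρr).trans_lt hrR
  have hmono : MonotoneOn (v - u) (Icc 0 ρ) := by
    refine monotoneOn_of_radial_nonneg (by linarith : (0 : ℝ) < m - 1) hρ
      ((hv.1.sub hu.1).mono (Icc_subset_odeDom hρR)) fun t ht => ?_
    have htR : ENNReal.ofReal t < R := (ENNReal.ofReal_le_ofReal ht.2.le).trans_lt hρR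
    have hut : 0 ≤ u t := hu.2.1 t ⟨ht.1.le, htR⟩
    have huv : u t < v t := sub_pos.1 (hpos t ⟨ht.1.le, ht.2⟩)
    rw [hu.radial_sub hv ht.1 htR, sub_nonneg]
    exact hφmono hut (hut.trans huv.le) huv.le
  have := hmono (left_mem_Icc.2 hρ.le) (right_mem_Icc.2 hρ.le) hρ.le
  linarith

/-- strict comparison of solutions with ordered initial values. -/
theorem sol_strict_comparison
    (m : ℝ) (hm : 2 < m)
    (φ : ℝ → ℝ) (hφ0 : φ 0 = 0)
    (hφmono : MonotoneOn φ (Set.Ici 0))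
    (hφnonneg : ∀ t : ℝ, 0 ≤ t → 0 ≤ φ t)
    (hφlip : ∀ x ∈ Set.Ici (0 : ℝ), ∃ K : NNReal, ∃ s ∈ nhdsWithin x (Set.Ici 0),
      LipschitzOnWith K φ s)
    (a b : ℝ) (ha : 0 ≤ a) (hab : a < b) (R : ℝ≥0∞) (hR : 0 < R)
    (u v : ℝ → ℝ) (hu : IsSolOn m φ a R u) (hv : IsSolOn m φ b R v) :
    ∀ r : ℝ, 0 ≤ r → ENNReal.ofReal r < R → u r < v r :=
  sol_strict_comparison_general m hm φ hφmono a b hab R u v hu hv
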